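/- Let (φ_j)_{j≥1} be a sequence of functions ℝ → ℝ such that each φ_j lies in H¹₀(0,1) with derivative g_j and the family is orthonormal in L²(0,1) (∫₀¹ φ_i φ_j dx = δ_{ij} for all i, j ≥ 1). Then the sequence of kinetic energies diverges: ∫₀¹ g_j(x)² dx → ∞ as j → ∞. -/

import Mathlib

/-!
Write `Φⱼ(x) = ∫₀ˣ φⱼ = ⟪𝟙_(0,x), φⱼ⟫`. By Bessel's inequality `Φⱼ(x) → 0` for every `x`, and
since `x ↦ 𝟙_(0,x)` is continuous into `L²(0,1)`, the indicators form a compact set, on which the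
`1`-Lipschitz functionals `⟪·, φⱼ⟫` tend to `0` uniformly: `sup |Φⱼ| → 0`. Integrating by parts
against `φⱼ(1) = 0` gives `1 = ∫ φⱼ² = -∫ gⱼ Φⱼ ≤ sup |Φⱼ| · (∫ gⱼ² + 1) / 2`.
-/

open MeasureTheory

/-- `φ` lies in `H¹₀(0,1)` with derivative `g`. -/
def InH10 (φ g : ℝ → ℝ) : Prop :=
  Measurable g ∧ IntegrableOn (fun t => g t ^ 2) (Set.Ioo 0 1) ∧
    (∀ x ∈ Set.Icc (0:ℝ) 1, φ x = ∫ t in (0:ℝ)..x, g t) ∧ φ 1 = 0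

open Set Filter Topology
open scoped symmDiff

section OrthonormalSequence

variable {𝕜 E : Type*} [RCLike 𝕜] [NormedAddCommGroup E] [InnerProductSpace 𝕜 E] {e : ℕ → E}

theorem Orthonormal.tendsto_inner_atTop_zero (he : Orthonormal 𝕜 e) (v : E) :
    Tendsto (fun j => inner 𝕜 v (e j)) atTop (𝓝 0) := by
  have hsq : Tendsto (fun j => ‖inner 𝕜 (e j) v‖ ^ 2) atTop (𝓝 0) :=
    (he.inner_products_summable (x := v)).tendsto_atTop_zero
  have hnorm := (Real.continuous_sqrt.tendsto 0).comp hsq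
  simp only [Function.comp_def, Real.sqrt_sq (norm_nonneg _), Real.sqrt_zero] at hnorm
  exact tendsto_zero_iff_norm_tendsto_zero.2 (by simpa only [norm_inner_symm] using hnorm)

theorem Orthonormal.eventually_forall_norm_inner_lt (he : Orthonormal 𝕜 e) {K : Set E}
    (hK : IsCompact K) {ε : ℝ} (hε : 0 < ε) :
    ∀ᶠ j in atTop, ∀ v ∈ K, ‖inner 𝕜 v (e j)‖ < ε := by
  obtain ⟨t, -, ht, hKt⟩ := finite_cover_balls_of_compact hK (half_pos hε)
  have hsmall : ∀ᶠ j in atTop, ∀ w ∈ t, ‖inner 𝕜 w (e j)‖ < ε / 2 :=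
    (eventually_all_finite ht).2 fun w _ => (he.tendsto_inner_atTop_zero w).norm.eventually
      (gt_mem_nhds (by simpa using half_pos hε))
  filter_upwards [hsmall] with j hj v hv
  obtain ⟨w, hwt, hvw⟩ := mem_iUnion₂.1 (hKt hv)
  calc ‖inner 𝕜 v (e j)‖ = ‖inner 𝕜 (v - w) (e j) + inner 𝕜 w (e j)‖ := by
        rw [← inner_add_left, sub_add_cancel]
    _ ≤ ‖v - w‖ * ‖e j‖ + ‖inner 𝕜 w (e j)‖ :=
        (norm_add_le _ _).trans (add_le_add_left (norm_inner_le_norm _ _) _)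
    _ < ε / 2 * 1 + ε / 2 := by
        rw [he.1 j]
        gcongr
        · rw [← dist_eq_norm]; exact hvw
        · exact hj w hwt
    _ = ε := by ring

end OrthonormalSequence

theorem orthonormal_toLp_of_integral_mul {ι α : Type*} [DecidableEq ι] [MeasurableSpace α]
    {μ : Measure α} {φ : ι → α → ℝ} (hφ : ∀ i, MemLp (φ i) 2 μ)
    (h : ∀ i j, ∫ x, φ i x * φ j x ∂μ = if i = j then 1 else 0) :
    Orthonormal ℝ fun i => (hφ i).toLp (φ i) := by
  refine orthonormal_iff_ite.2 fun i j => ?_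
  rw [L2.inner_def, ← h i j]
  refine integral_congr_ae ?_
  filter_upwards [(hφ i).coeFn_toLp, (hφ j).coeFn_toLp] with x hi hj
  simp [hi, hj, mul_comm]

section IntervalL2

variable {a b : ℝ}

noncomputable def indicatorIioLp (a b x : ℝ) : Lp ℝ 2 (volume.restrict (Ioo a b)) :=
  indicatorConstLp 2 measurableSet_Iio (measure_ne_top _ (Iio x)) 1

theorem Real.volume_Iio_symmDiff_Iio_le (x y : ℝ) : volume (Iio y ∆ Iio x) ≤ ENNReal.ofReal |y - x| := by
  rw [← Real.volume_interval]
  refine measure_mono fun t ht => ?_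
  simp only [mem_symmDiff, mem_Iio, not_lt] at ht
  rcases ht with ⟨h1, h2⟩ | ⟨h1, h2⟩
  · exact ⟨min_le_of_left_le h2, le_max_of_le_right h1.le⟩
  · exact ⟨min_le_of_right_le h2, le_max_of_le_left h1.le⟩

theorem continuous_indicatorIioLp : Continuous (indicatorIioLp a b) := by
  refine continuous_indicatorConstLp_set ENNReal.ofNat_ne_top fun x => ?_
  have hdist : Tendsto (fun y => ENNReal.ofReal |y - x|) (𝓝 x) (𝓝 0) :=
    (ENNReal.continuous_ofReal.comp (continuous_sub_right x).abs).tendsto' x 0 (by simp)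
  refine tendsto_of_tendsto_of_tendsto_of_le_of_le tendsto_const_nhds hdist (fun _ => bot_le)
    fun y => ?_
  exact (Measure.restrict_apply_le _ _).trans (Real.volume_Iio_symmDiff_Iio_le x y)

theorem inner_indicatorIioLp_toLp {f : ℝ → ℝ} (hf : MemLp f 2 (volume.restrict (Ioo a b)))
    {x : ℝ} (hax : a ≤ x) (hxb : x ≤ b) :
    inner ℝ (indicatorIioLp a b x) (hf.toLp f) = ∫ t in a..x, f t := by
  rw [indicatorIioLp, L2.inner_indicatorConstLp_one,
    integral_congr_ae (ae_restrict_of_ae hf.coeFn_toLp),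
    Measure.restrict_restrict measurableSet_Iio, Iio_inter_Ioo, min_eq_left hxb, intervalIntegral.integral_of_le hax,
    integral_Ioc_eq_integral_Ioo]

end IntervalL2

theorem intervalIntegral.integral_primitive_mul {f g : ℝ → ℝ} {a b : ℝ}
    (hf : IntervalIntegrable f volume a b) (hg : IntervalIntegrable g volume a b) :
    ∫ x in a..b, (∫ t in a..x, f t) * g x =
      (∫ t in a..b, f t) * (∫ t in a..b, g t) - ∫ x in a..b, f x * ∫ t in a..x, g t := by
  have hderiv : ∀ {h : ℝ → ℝ}, IntervalIntegrable h volume a b →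
      ∀ᵐ x, x ∈ uIoc a b → deriv (fun y => ∫ t in a..y, h t) x = h x := fun hh => by
    filter_upwards [hh.ae_hasDerivAt_integral] with x hx hxab
    exact (hx (uIoc_subset_uIcc hxab) a left_mem_uIcc).deriv
  have hF := hf.absolutelyContinuousOnInterval_intervalIntegral (c := a) left_mem_uIcc
  have hG := hg.absolutelyContinuousOnInterval_intervalIntegral (c := a) left_mem_uIcc
  have hparts := hF.integral_mul_deriv_eq_deriv_mul hG
  have hG' : ∫ x in a..b, (∫ t in a..x, f t) * deriv (fun y => ∫ t in a..y, g t) x =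
      ∫ x in a..b, (∫ t in a..x, f t) * g x :=
    intervalIntegral.integral_congr_ae ((hderiv hg).mono fun x hx hxab => by rw [hx hxab])
  have hF' : ∫ x in a..b, deriv (fun y => ∫ t in a..y, f t) x * ∫ t in a..x, g t =
      ∫ x in a..b, f x * ∫ t in a..x, g t :=
    intervalIntegral.integral_congr_ae ((hderiv hf).mono fun x hx hxab => by rw [hx hxab])
  simpa only [hG', hF', intervalIntegral.integral_same, zero_mul, sub_zero] using hparts

theorem integral_Ioo_eq_intervalIntegral {f : ℝ → ℝ} {a b : ℝ} (hab : a ≤ b) :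
    ∫ x in Ioo a b, f x = ∫ x in a..b, f x := by
  rw [intervalIntegral.integral_of_le hab, integral_Ioc_eq_integral_Ioo]

namespace InH10

variable {φ g : ℝ → ℝ}

theorem intervalIntegrable_sq (h : InH10 φ g) :
    IntervalIntegrable (fun t => g t ^ 2) volume 0 1 :=
  (intervalIntegrable_iff_integrableOn_Ioo_of_le zero_le_one).2 h.2.1

theorem intervalIntegrable (h : InH10 φ g) : IntervalIntegrable g volume 0 1 :=
  (intervalIntegrable_iff_integrableOn_Ioo_of_le zero_le_one).2 <|
    ((memLp_two_iff_integrable_sq h.1.aestronglyMeasurable).2 h.2.1).integrable one_le_two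

theorem continuousOn (h : InH10 φ g) : ContinuousOn φ (Icc 0 1) := by
  have hprim := (h.intervalIntegrable.absolutelyContinuousOnInterval_intervalIntegral
    left_mem_uIcc).continuousOn
  rw [uIcc_of_le zero_le_one] at hprim
  exact hprim.congr h.2.2.1

theorem memLp_two (h : InH10 φ g) : MemLp φ 2 (volume.restrict (Ioo 0 1)) :=
  (memLp_two_iff_integrable_sq ((h.continuousOn.mono Ioo_subset_Icc_self).aestronglyMeasurable
    measurableSet_Ioo)).2 ((h.continuousOn.pow 2).integrableOn_Icc.mono_set Ioo_subset_Icc_self)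

theorem integral_sq_eq (h : InH10 φ g) :
    ∫ x in 0..1, φ x ^ 2 = -∫ x in 0..1, g x * ∫ t in 0..x, φ t := by
  have hparts := intervalIntegral.integral_primitive_mul h.intervalIntegrable
    (h.continuousOn.intervalIntegrable_of_Icc zero_le_one)
  rw [← h.2.2.1 1 ⟨zero_le_one, le_rfl⟩, h.2.2.2, zero_mul, zero_sub] at hparts
  rw [← hparts]
  refine intervalIntegral.integral_congr fun x hx => ?_
  rw [uIcc_of_le zero_le_one] at hx
  rw [← h.2.2.1 x hx, sq]

theorem two_le_mul_energy (h : InH10 φ g) (hnorm : ∫ x in Ioo 0 1, φ x * φ x = 1) {δ : ℝ}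
    (hδ : ∀ x ∈ Icc (0:ℝ) 1, |∫ t in 0..x, φ t| ≤ δ) :
    2 ≤ δ * ((∫ x in Ioo 0 1, g x ^ 2) + 1) := by
  have hpointwise : ∀ x ∈ Ioc (0:ℝ) 1, ‖g x * ∫ t in 0..x, φ t‖ ≤ δ / 2 * (g x ^ 2 + 1) := by
    intro x hx
    have hΦ := hδ x (Ioc_subset_Icc_self hx)
    rw [norm_mul, Real.norm_eq_abs, Real.norm_eq_abs]
    nlinarith [abs_nonneg (g x), sq_abs (g x), sq_nonneg (|g x| - 1),
      abs_nonneg (∫ t in 0..x, φ t)]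
  have hbound := intervalIntegral.norm_integral_le_of_norm_le zero_le_one
    (ae_of_all _ hpointwise) ((h.intervalIntegrable_sq.add intervalIntegrable_const).const_mul _)
  rw [intervalIntegral.integral_const_mul, intervalIntegral.integral_add h.intervalIntegrable_sq
    intervalIntegrable_const, ← norm_neg, ← h.integral_sq_eq] at hbound
  simp only [integral_Ioo_eq_intervalIntegral zero_le_one, ← sq] at hnorm ⊢
  simp only [hnorm, intervalIntegral.integral_const, sub_zero, smul_eq_mul, one_mul, norm_one]
    at hbound
  linarith

end InH10

theorem kinetic_energies_tendsto_atTop (φ g : ℕ → ℝ → ℝ)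
    (hH : ∀ j, 1 ≤ j → InH10 (φ j) (g j))
    (horth : ∀ i, 1 ≤ i → ∀ j, 1 ≤ j →
      (∫ x in Set.Ioo (0:ℝ) 1, φ i x * φ j x) = if i = j then 1 else 0) :
    Filter.Tendsto (fun j : ℕ => ∫ x in Set.Ioo (0:ℝ) 1, (g j x) ^ 2)
      Filter.atTop Filter.atTop := by
  have hmem : ∀ j, MemLp (φ (j + 1)) 2 (volume.restrict (Ioo 0 1)) := fun j =>
    (hH (j + 1) j.succ_pos).memLp_two
  have he : Orthonormal ℝ fun j => (hmem j).toLp (φ (j + 1)) :=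
    orthonormal_toLp_of_integral_mul hmem fun i j => by
      simpa using horth (i + 1) i.succ_pos (j + 1) j.succ_pos
  have hK : IsCompact (indicatorIioLp 0 1 '' Icc 0 1) :=
    isCompact_Icc.image continuous_indicatorIioLp
  refine (tendsto_add_atTop_iff_nat 1).1 (tendsto_atTop.2 fun M => ?_)
  have hδ : (0:ℝ) < 2 / (max M 0 + 1) := by positivity
  filter_upwards [he.eventually_forall_norm_inner_lt hK hδ] with j hj
  have hsmall : ∀ x ∈ Icc (0:ℝ) 1, |∫ t in 0..x, φ (j + 1) t| ≤ 2 / (max M 0 + 1) :=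
    fun x hx => by
      rw [← inner_indicatorIioLp_toLp (hmem j) hx.1 hx.2, ← Real.norm_eq_abs]
      exact (hj _ (mem_image_of_mem _ hx)).le
  have hE := (hH (j + 1) j.succ_pos).two_le_mul_energy
    (by simpa using horth (j + 1) j.succ_pos (j + 1) j.succ_pos) hsmall
  rw [div_mul_eq_mul_div, le_div_iff₀ (by positivity)] at hE
  linarith [le_max_left M 0]
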